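/- arXiv:1712.06816 — 2 statements merged into one kernel-verified Lean document; each statement's English description precedes it below -/
import Mathlib

section
/- (Eigenvalue error identity.) Let H be a real inner product space, ν > 0, and let a(·,·) be a symmetric positive semidefinite bilinear form on a real vector space Φ given by a(σ,τ) = 2ν⟨Aσ, Aτ⟩ for a linear map A into an inner product space. Suppose σ, σ_h ∈ Φ and u, u_h ∈ H with ‖u‖ = ‖u_h‖ = 1 and real numbers λ, λ_h satisfy a(σ,σ) = λ, a(σ_h,σ_h) = λ_h, and a(σ, σ_h) = λ_h⟨u_h, u⟩. Then λ − λ_h = a(σ − σ_h, σ − σ_h) − λ_h‖u − u_h‖². -/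
open scoped RealInnerProductSpace

theorem eigenvalue_error_identity
    {H K : Type*} [NormedAddCommGroup H] [InnerProductSpace ℝ H]
    [NormedAddCommGroup K] [InnerProductSpace ℝ K]
    {Φ : Type*} [AddCommGroup Φ] [Module ℝ Φ]
    (A : Φ →ₗ[ℝ] K) (ν : ℝ) (hν : 0 < ν)
    (a : Φ → Φ → ℝ) (ha : ∀ σ τ : Φ, a σ τ = 2 * ν * ⟪A σ, A τ⟫)
    (σ σh : Φ) (u uh : H) (hu : ‖u‖ = 1) (huh : ‖uh‖ = 1)
    (lam lamh : ℝ)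
    (h1 : a σ σ = lam) (h2 : a σh σh = lamh) (h3 : a σ σh = lamh * ⟪uh, u⟫) :
    lam - lamh = a (σ - σh) (σ - σh) - lamh * ‖u - uh‖ ^ 2 := by
  have hexp : a (σ - σh) (σ - σh) = a σ σ - 2 * a σ σh + a σh σh := by
    simp only [ha, map_sub, inner_sub_sub_self]
    have : ⟪A σh, A σ⟫ = ⟪A σ, A σh⟫ := real_inner_comm _ _
    rw [this]; ring
  have hnorm : ‖u - uh‖ ^ 2 = 2 - 2 * ⟪uh, u⟫ := by
    rw [← real_inner_self_eq_norm_sq, inner_sub_sub_self,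
      real_inner_self_eq_norm_sq, real_inner_self_eq_norm_sq, hu, huh,
      real_inner_comm u uh]
    ring
  rw [hexp, hnorm, h1, h2, h3]; ring
end

section
/- Let Φ, V be real inner product spaces, b: Φ × V → ℝ a bilinear form, A: Φ → Φ linear with ⟨Aτ, σ⟩ = ⟨τ, Aσ⟩, and suppose (σ, u) and (σ_h, u_h) satisfy: ⟨Aσ, τ⟩ + b(τ, u) = 0 for all τ, b(σ, v) = −λ⟨u, v⟩ for all v, and the discrete Galerkin relations ⟨A(σ_h − σ), σ_h⟩ + b(σ_h, u_h − u) = 0 and b(σ_h − σ, u_h) = 0. Then −λ⟨u_h − u, u⟩ = ⟨A(σ − σ_h), σ_h − σ⟩ + 2·(b(σ − σ_h, u_h − u)). -/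
open scoped RealInnerProductSpace

theorem duality_identity
    {Φ V : Type*} [NormedAddCommGroup Φ] [InnerProductSpace ℝ Φ]
    [NormedAddCommGroup V] [InnerProductSpace ℝ V]
    (b : Φ →ₗ[ℝ] V →ₗ[ℝ] ℝ) (A : Φ →ₗ[ℝ] Φ)
    (hA : ∀ τ σ : Φ, ⟪A τ, σ⟫ = ⟪τ, A σ⟫)
    (σ σh : Φ) (u uh : V) (lam : ℝ)
    (hcont1 : ∀ τ : Φ, ⟪A σ, τ⟫ + b τ u = 0)
    (hcont2 : ∀ v : V, b σ v = -lam * ⟪u, v⟫)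
    (hdisc1 : ⟪A (σh - σ), σh⟫ + b σh (uh - u) = 0)
    (hdisc2 : b (σh - σ) uh = 0) :
    -lam * ⟪uh - u, u⟫ = ⟪A (σ - σh), σh - σ⟫ + 2 * b (σ - σh) (uh - u) := by
  have h1 := hcont1 (σh - σ)
  have h2 := hcont2 (uh - u)
  have hsym : ⟪A (σh - σ), σ⟫ = ⟪σh - σ, A σ⟫ := hA _ _
  have hic : lam * ⟪(uh - u : V), u⟫ = lam * ⟪u, uh - u⟫ := by rw [real_inner_comm]
  have hic2 : ⟪A σ, σh - σ⟫ = ⟪σh - σ, A σ⟫ := real_inner_comm _ _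
  simp only [map_sub, LinearMap.sub_apply, inner_sub_left, inner_sub_right] at *
  ring_nf at *
  linarith
end
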